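/- arXiv:1901.09120 — 4 statements merged into one kernel-verified Lean document; each statement's English description precedes it below -/
import Mathlib

section
/- There is a surjective monoid homomorphism p_α from the origami monoid O_n onto the Jones monoid J_n determined by p_α(α_i) = h_i and p_α(β_i) = 1 for all i = 1,…,n−1. -/
/-- Generators of the origami monoid `Oₙ`: `Sum.inl i` is αᵢ, `Sum.inr i` is βᵢ
(indices `i : Fin (n-1)` corresponding to `1, …, n-1`). -/
abbrev Gen (n : ℕ) := Fin (n-1) ⊕ Fin (n-1)

def ga {n : ℕ} (i : Fin (n-1)) : FreeMonoid (Gen n) := FreeMonoid.of (Sum.inl i)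
def gb {n : ℕ} (i : Fin (n-1)) : FreeMonoid (Gen n) := FreeMonoid.of (Sum.inr i)

/-- The defining relations of the origami monoid `Oₙ`:
(1) idempotency of γᵢ for γ ∈ {α, β}; (1a) idempotency of αᵢβᵢ and βᵢαᵢ;
(2),(3) Temperley–Lieb relations γᵢγⱼγᵢ = γᵢ for |i-j| = 1, together with their
substituted versions (2a),(3a) (γᵢ = αᵢβᵢ or βᵢαᵢ) and (2b),(3b) (γᵢ = αᵢβᵢαᵢ or βᵢαᵢβᵢ);
(4) inter-commutation αᵢβⱼ = βⱼαᵢ for i ≠ j;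
(5) intra-commutation γᵢγⱼ = γⱼγᵢ for |i-j| ≥ 2. -/
def ORel (n : ℕ) : FreeMonoid (Gen n) → FreeMonoid (Gen n) → Prop := fun x y =>
  (∃ i : Fin (n-1),
      (x = ga i * ga i ∧ y = ga i) ∨ (x = gb i * gb i ∧ y = gb i) ∨
      (x = (ga i * gb i) * (ga i * gb i) ∧ y = ga i * gb i) ∨
      (x = (gb i * ga i) * (gb i * ga i) ∧ y = gb i * ga i)) ∨
  (∃ i j : Fin (n-1), (i.val + 1 = j.val ∨ j.val + 1 = i.val) ∧
      ((x = ga i * ga j * ga i ∧ y = ga i) ∨ (x = gb i * gb j * gb i ∧ y = gb i) ∨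
       (x = (ga i * gb i) * (ga j * gb j) * (ga i * gb i) ∧ y = ga i * gb i) ∨
       (x = (gb i * ga i) * (gb j * ga j) * (gb i * ga i) ∧ y = gb i * ga i) ∨
       (x = (ga i * gb i * ga i) * (ga j * gb j * ga j) * (ga i * gb i * ga i) ∧
          y = ga i * gb i * ga i) ∨
       (x = (gb i * ga i * gb i) * (gb j * ga j * gb j) * (gb i * ga i * gb i) ∧
          y = gb i * ga i * gb i))) ∨
  (∃ i j : Fin (n-1), i ≠ j ∧ x = ga i * gb j ∧ y = gb j * ga i) ∨
  (∃ i j : Fin (n-1), (i.val + 2 ≤ j.val ∨ j.val + 2 ≤ i.val) ∧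
      ((x = ga i * ga j ∧ y = ga j * ga i) ∨ (x = gb i * gb j ∧ y = gb j * gb i)))

/-- The origami monoid `Oₙ`. -/
abbrev OM (n : ℕ) := (conGen (ORel n)).Quotient

def qO (n : ℕ) : FreeMonoid (Gen n) →* OM n := (conGen (ORel n)).mk'
def oα {n : ℕ} (i : Fin (n-1)) : OM n := qO n (ga i)
def oβ {n : ℕ} (i : Fin (n-1)) : OM n := qO n (gb i)

def hg {n : ℕ} (i : Fin (n-1)) : FreeMonoid (Fin (n-1)) := FreeMonoid.of i

/-- The defining relations of the Jones monoid `Jₙ`: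
`hᵢ² = hᵢ`, `hᵢhⱼhᵢ = hᵢ` for |i-j| = 1, `hᵢhⱼ = hⱼhᵢ` for |i-j| ≥ 2. -/
def JRel (n : ℕ) : FreeMonoid (Fin (n-1)) → FreeMonoid (Fin (n-1)) → Prop := fun x y =>
  (∃ i, x = hg i * hg i ∧ y = hg i) ∨
  (∃ i j, (i.val + 1 = j.val ∨ j.val + 1 = i.val) ∧ x = hg i * hg j * hg i ∧ y = hg i) ∨
  (∃ i j, (i.val + 2 ≤ j.val ∨ j.val + 2 ≤ i.val) ∧ x = hg i * hg j ∧ y = hg j * hg i)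

/-- The Jones monoid `Jₙ`. -/
abbrev JM (n : ℕ) := (conGen (JRel n)).Quotient

def qJ (n : ℕ) : FreeMonoid (Fin (n-1)) →* JM n := (conGen (JRel n)).mk'
def jh {n : ℕ} (i : Fin (n-1)) : JM n := qJ n (hg i)


lemma jrel {n : ℕ} {x y : FreeMonoid (Fin (n-1))} (h : JRel n x y) : qJ n x = qJ n y :=
  (Con.eq _).mpr (ConGen.Rel.of _ _ h)

lemma jsq {n : ℕ} (i : Fin (n-1)) : jh (n := n) i * jh i = jh i := by
  have := jrel (n := n) (x := hg i * hg i) (y := hg i) (Or.inl ⟨i, rfl, rfl⟩)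
  simpa [jh, qJ] using this

lemma jbraid {n : ℕ} {i j : Fin (n-1)} (h : i.val + 1 = j.val ∨ j.val + 1 = i.val) :
    jh (n := n) i * jh j * jh i = jh i := by
  have := jrel (n := n) (x := hg i * hg j * hg i) (y := hg i)
    (Or.inr (Or.inl ⟨i, j, h, rfl, rfl⟩))
  simpa [jh, qJ] using this

lemma jcomm {n : ℕ} {i j : Fin (n-1)} (h : i.val + 2 ≤ j.val ∨ j.val + 2 ≤ i.val) :
    jh (n := n) i * jh j = jh j * jh i := by
  have := jrel (n := n) (x := hg i * hg j) (y := hg j * hg i)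
    (Or.inr (Or.inr ⟨i, j, h, rfl, rfl⟩))
  simpa [jh, qJ] using this

def phi (n : ℕ) : FreeMonoid (Gen n) →* JM n :=
  FreeMonoid.lift (Sum.elim (fun i => jh i) (fun _ => 1))

lemma phi_ga {n : ℕ} (i : Fin (n-1)) : phi n (ga i) = jh i := by
  simp [phi, ga]

lemma phi_gb {n : ℕ} (i : Fin (n-1)) : phi n (gb i) = 1 := by
  simp [phi, gb]

lemma phi_resp {n : ℕ} : ∀ x y, ORel n x y → phi n x = phi n y := by
  rintro x y (⟨i, (⟨rfl, rfl⟩|⟨rfl, rfl⟩|⟨rfl, rfl⟩|⟨rfl, rfl⟩)⟩ |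
    ⟨i, j, h, (⟨rfl, rfl⟩|⟨rfl, rfl⟩|⟨rfl, rfl⟩|⟨rfl, rfl⟩|⟨rfl, rfl⟩|⟨rfl, rfl⟩)⟩ |
    ⟨i, j, h, rfl, rfl⟩ | ⟨i, j, h, (⟨rfl, rfl⟩|⟨rfl, rfl⟩)⟩)
  · simp [phi_ga, phi_gb, jsq]
  · simp [phi_ga, phi_gb]
  · simp [phi_ga, phi_gb, jsq]
  · simp [phi_ga, phi_gb, jsq]
  · simp [phi_ga, phi_gb, jbraid h, jsq]
  · simp [phi_ga, phi_gb]
  · simp [phi_ga, phi_gb, jbraid h, jsq]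
  · simp [phi_ga, phi_gb, jbraid h, jsq]
  · simp [phi_ga, phi_gb, jbraid h, jsq]
  · simp [phi_ga, phi_gb, jbraid h, jsq]
  · simp [phi_ga, phi_gb]
  · simp [phi_ga, phi_gb, jcomm h]
  · simp [phi_ga, phi_gb]

/-- There is a surjective monoid homomorphism `p_α : Oₙ → Jₙ` with
`p_α(αᵢ) = hᵢ` and `p_α(βᵢ) = 1` for all `i`. -/
theorem stmt_8 (n : ℕ) :
    ∃ f : OM n →* JM n, Function.Surjective f ∧
      (∀ i : Fin (n-1), f (oα i) = jh i) ∧ (∀ i : Fin (n-1), f (oβ i) = 1) := by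
  have hle : conGen (ORel n) ≤ Con.ker (phi n) := by
    apply Con.conGen_le.mpr
    intro x y h
    exact phi_resp x y h
  refine ⟨(conGen (ORel n)).lift (phi n) hle, ?_, ?_, ?_⟩
  · intro z
    obtain ⟨w, rfl⟩ := Con.mk'_surjective z
    refine ⟨qO n (FreeMonoid.map Sum.inl w), ?_⟩
    have : ((conGen (ORel n)).lift (phi n) hle).comp ((qO n).comp (FreeMonoid.map Sum.inl))
        = qJ n := by
      apply FreeMonoid.hom_eq
      intro i
      simp [qO, qJ, Con.lift_mk', phi]
      rfl
    exact DFunLike.congr_fun this w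
  · intro i
    simpa [oα, qO, Con.lift_mk'] using phi_ga i
  · intro i
    simpa [oβ, qO, Con.lift_mk'] using phi_gb i
end

section
/- Let x be a non-identity element of O_n representable by a word using only α-generators, and y a non-identity element of O_n^{αβ} (representable only by words containing both α- and β-generators). Then x and y are not Green's D-related in O_n. -/
def hasA {n : ℕ} (w : FreeMonoid (Gen n)) : Prop :=
  ∃ i : Fin (n-1), Sum.inl i ∈ FreeMonoid.toList w

def hasB {n : ℕ} (w : FreeMonoid (Gen n)) : Prop :=
  ∃ i : Fin (n-1), Sum.inr i ∈ FreeMonoid.toList w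


lemma hasB_mul {n : ℕ} (u v : FreeMonoid (Gen n)) : hasB (u * v) ↔ hasB u ∨ hasB v := by
  simp [hasB, exists_or]

lemma hasB_ga {n : ℕ} (i : Fin (n-1)) : ¬ hasB (ga i) := by
  simp [hasB, ga]

lemma hasB_gb {n : ℕ} (i : Fin (n-1)) : hasB (gb i) := ⟨i, by simp [gb]⟩

lemma hasB_invariant {n : ℕ} {u v : FreeMonoid (Gen n)} (h : conGen (ORel n) u v) :
    hasB u ↔ hasB v := by
  induction h with
  | of u v h =>
    rcases h with ⟨i, h | h | h | h⟩ | ⟨i, j, _, h | h | h | h | h | h⟩ |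
      ⟨i, j, _, h1, h2⟩ | ⟨i, j, _, ⟨h1, h2⟩ | ⟨h1, h2⟩⟩ <;>
    · first
      | (obtain ⟨h1, h2⟩ := h; subst h1; subst h2;
         simp [hasB_mul, hasB_ga, hasB_gb]; try tauto)
      | (subst h1; subst h2; simp [hasB_mul, hasB_ga, hasB_gb]; try tauto)
  | refl => rfl
  | symm _ ih => exact ih.symm
  | trans _ _ ih1 ih2 => exact ih1.trans ih2
  | mul _ _ ih1 ih2 => rw [hasB_mul, hasB_mul, ih1, ih2]

/-- If `x ≠ 1` is representable by a word using only α-generators and `y ≠ 1` lies in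
`Oₙ^{αβ}` (every representing word contains both an α- and a β-generator), then `x` and
`y` are not Green's D-related in `Oₙ`. -/
theorem stmt_12 (n : ℕ) (x y : OM n) (hx1 : x ≠ 1)
    (hx : ∃ w : FreeMonoid (Gen n),
      (∀ g ∈ FreeMonoid.toList w, ∃ i : Fin (n-1), g = Sum.inl i) ∧ qO n w = x)
    (hy1 : y ≠ 1)
    (hy : ∀ w : FreeMonoid (Gen n), qO n w = y → hasA w ∧ hasB w) :
    ¬ ∃ c : OM n,
      {z : OM n | ∃ m, z = m * x} = {z : OM n | ∃ m, z = m * c} ∧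
      {z : OM n | ∃ m, z = c * m} = {z : OM n | ∃ m, z = y * m} := by
  rintro ⟨c, h1, h2⟩
  have hxmem : x ∈ {z : OM n | ∃ m, z = m * c} := h1 ▸ ⟨1, (one_mul x).symm⟩
  obtain ⟨m₂, hm₂⟩ := hxmem
  have hcmem : c ∈ {z : OM n | ∃ m, z = y * m} := h2 ▸ ⟨1, (mul_one c).symm⟩
  obtain ⟨m, hm⟩ := hcmem
  obtain ⟨w, hwA, hwx⟩ := hx
  obtain ⟨w2, hw2⟩ := Con.mk'_surjective (c := conGen (ORel n)) m₂
  obtain ⟨wy, hwy⟩ := Con.mk'_surjective (c := conGen (ORel n)) y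
  obtain ⟨wm, hwm⟩ := Con.mk'_surjective (c := conGen (ORel n)) m
  have hbig : qO n (w2 * wy * wm) = x := by
    simp only [qO]
    rw [map_mul, map_mul, hw2, hwy, hwm]
    rw [hm₂, hm, mul_assoc]
  have hcon : conGen (ORel n) (w2 * wy * wm) w := by
    have : qO n (w2 * wy * wm) = qO n w := by rw [hbig, hwx]
    exact (Con.eq _).mp this
  have hB : hasB (w2 * wy * wm) := by
    rw [hasB_mul, hasB_mul]
    exact Or.inl (Or.inr (hy wy hwy).2)
  have hnB : ¬ hasB w := by
    rintro ⟨i, hi⟩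
    obtain ⟨j, hj⟩ := hwA _ hi
    cases hj
  exact hnB ((hasB_invariant hcon).mp hB)
end

section
/- In any monoid, if e and f are idempotents such that (ef)² = ef and (fe)² = fe, then the submonoid generated by e and f has at most 7 elements, namely {1, e, f, ef, fe, efe, fef}. -/
set_option maxHeartbeats 2000000


/-- In any monoid, if `e` and `f` are idempotents with `(ef)² = ef` and `(fe)² = fe`,
then the submonoid generated by `e` and `f` is contained in the seven-element set
`{1, e, f, ef, fe, efe, fef}`. -/
theorem stmt_14 {M : Type*} [Monoid M] (e f : M)
    (he : e * e = e) (hf : f * f = f)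
    (hef : (e * f) * (e * f) = e * f) (hfe : (f * e) * (f * e) = f * e) :
    (Submonoid.closure {e, f} : Set M) ⊆
      {1, e, f, e * f, f * e, e * f * e, f * e * f} := by
  have he' : ∀ x : M, e * (e * x) = e * x := fun x => by
    rw [← mul_assoc, he]
  have hf' : ∀ x : M, f * (f * x) = f * x := fun x => by
    rw [← mul_assoc, hf]
  have hef' : ∀ x : M, e * (f * (e * (f * x))) = e * (f * x) := fun x => by
    have := congrArg (· * x) hef
    simpa [mul_assoc] using this
  have hfe' : ∀ x : M, f * (e * (f * (e * x))) = f * (e * x) := fun x => by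
    have := congrArg (· * x) hfe
    simpa [mul_assoc] using this
  have hef2 : e * (f * (e * f)) = e * f := by simpa [mul_assoc] using hef
  have hfe2 : f * (e * (f * e)) = f * e := by simpa [mul_assoc] using hfe
  intro x hx
  induction hx using Submonoid.closure_induction with
  | mem x hx => rcases hx with h | h <;> subst h <;> simp
  | one => simp
  | mul x y hx hy ihx ihy =>
    simp only [Set.mem_insert_iff, Set.mem_singleton_iff] at ihx ihy ⊢
    rcases ihx with h | h | h | h | h | h | h <;> subst h <;>
      rcases ihy with h | h | h | h | h | h | h <;> subst h <;>
      simp [mul_assoc, he, hf, he', hf', hef', hfe', hef2, hfe2]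
end

section
/- If M is a finite monoid, then Green's relations D and J on M coincide: for all a, b ∈ M, (∃c, Ma = Mc ∧ cM = bM) if and only if MaM = MbM. -/
private lemma idem_pow {M : Type*} [Monoid M] [Finite M] (x : M) :
    ∃ m, 1 ≤ m ∧ x ^ m * x ^ m = x ^ m := by
  obtain ⟨i, j, hne, hij⟩ := Finite.exists_ne_map_eq_of_infinite (fun n : ℕ => x ^ (n + 1))
  wlog hlt : i < j generalizing i j
  · exact this j i (Ne.symm hne) hij.symm (by omega)
  set m := i + 1 with hm
  set k := j - i with hk
  have hk1 : 1 ≤ k := by omega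
  have hbase : x ^ m = x ^ (m + k) := by
    rw [hij]; congr 1; omega
  have hstep : ∀ j : ℕ, x ^ m = x ^ (m + j * k) := by
    intro j
    induction j with
    | zero => simp
    | succ n ih =>
      have : x ^ (m + (n + 1) * k) = x ^ (m + k) * x ^ (n * k) := by
        rw [← pow_add]; congr 1; ring
      rw [this, ← hbase, ← pow_add, ← ih]
  have hmk : m ≤ m * k := Nat.le_mul_of_pos_right m (by omega)
  refine ⟨m * k, Nat.mul_pos (by omega) hk1, ?_⟩
  rw [← pow_add]
  calc x ^ (m * k + m * k) = x ^ (m * k - m) * x ^ (m + m * k) := by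
        rw [← pow_add]; congr 1; omega
    _ = x ^ (m * k - m) * x ^ m := by rw [← hstep m]
    _ = x ^ (m * k - m + m) := by rw [← pow_add]
    _ = x ^ (m * k) := by congr 1; omega

private lemma stab_pow {M : Type*} [Monoid M] {s t a : M} (h : a = s * a * t) :
    ∀ n, a = s ^ n * a * t ^ n := by
  intro n
  induction n with
  | zero => simp
  | succ n ih =>
    calc a = s * a * t := h
      _ = s * (s ^ n * a * t ^ n) * t := by rw [← ih]
      _ = s ^ (n + 1) * a * t ^ (n + 1) := by
        rw [pow_succ' s n, pow_succ t n]
        simp [mul_assoc]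

private lemma stab_left {M : Type*} [Monoid M] [Finite M] {s t a : M} (h : a = s * a * t) :
    ∃ m, 1 ≤ m ∧ a = s ^ m * a := by
  obtain ⟨m, hm1, hid⟩ := idem_pow t
  refine ⟨m, hm1, ?_⟩
  calc a = s ^ (m + m) * a * t ^ (m + m) := stab_pow h (m + m)
    _ = s ^ m * (s ^ m * a * (t ^ m * t ^ m)) := by
        rw [pow_add, pow_add]; simp [mul_assoc]
    _ = s ^ m * (s ^ m * a * t ^ m) := by rw [hid]
    _ = s ^ m * a := by rw [← stab_pow h m]

private lemma stab_right {M : Type*} [Monoid M] [Finite M] {s t a : M} (h : a = s * a * t) :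
    ∃ m, 1 ≤ m ∧ a = a * t ^ m := by
  obtain ⟨m, hm1, hid⟩ := idem_pow s
  refine ⟨m, hm1, ?_⟩
  calc a = s ^ (m + m) * a * t ^ (m + m) := stab_pow h (m + m)
    _ = s ^ m * s ^ m * a * t ^ m * t ^ m := by
        rw [pow_add, pow_add]; simp [mul_assoc]
    _ = (s ^ m * a * t ^ m) * t ^ m := by rw [hid]
    _ = a * t ^ m := by rw [← stab_pow h m]

/-- In a finite monoid, Green's relations D and J coincide: `a` and `b` are D-related
(there is `c` with `Ma = Mc` and `cM = bM`) iff they generate the same two-sided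
principal ideal `MaM = MbM`. -/
theorem stmt_19 {M : Type*} [Monoid M] [Finite M] (a b : M) :
    (∃ c : M, {z : M | ∃ x, z = x * a} = {z : M | ∃ x, z = x * c} ∧
        {z : M | ∃ x, z = c * x} = {z : M | ∃ x, z = b * x}) ↔
      {z : M | ∃ x y, z = x * a * y} = {z : M | ∃ x y, z = x * b * y} := by
  constructor
  · rintro ⟨c, hL, hR⟩
    -- extract witnesses
    have hc : ∃ x, c = x * a := by
      have : c ∈ {z : M | ∃ x, z = x * c} := ⟨1, by simp⟩
      rw [← hL] at this; exact this
    have ha : ∃ x, a = x * c := by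
      have : a ∈ {z : M | ∃ x, z = x * a} := ⟨1, by simp⟩
      rw [hL] at this; exact this
    have hb : ∃ y, b = c * y := by
      have : b ∈ {z : M | ∃ x, z = b * x} := ⟨1, by simp⟩
      rw [← hR] at this; exact this
    have hc' : ∃ y, c = b * y := by
      have : c ∈ {z : M | ∃ x, z = c * x} := ⟨1, by simp⟩
      rw [hR] at this; exact this
    obtain ⟨x, hx⟩ := hc
    obtain ⟨x', hx'⟩ := ha
    obtain ⟨y, hy⟩ := hb
    obtain ⟨y', hy'⟩ := hc'
    ext z
    constructor
    · rintro ⟨u, v, rfl⟩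
      exact ⟨u * x', y' * v, by rw [hx', hy']; simp [mul_assoc]⟩
    · rintro ⟨u, v, rfl⟩
      exact ⟨u * x, y * v, by rw [hy, hx]; simp [mul_assoc]⟩
  · intro h
    have hb : ∃ x y, b = x * a * y := by
      have : b ∈ {z : M | ∃ x y, z = x * b * y} := ⟨1, 1, by simp⟩
      rw [← h] at this; exact this
    have ha : ∃ u v, a = u * b * v := by
      have : a ∈ {z : M | ∃ x y, z = x * a * y} := ⟨1, 1, by simp⟩
      rw [h] at this; exact this
    obtain ⟨x, y, hxy⟩ := hb
    obtain ⟨u, v, huv⟩ := ha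
    have key : a = (u * x) * a * (y * v) := by
      calc a = u * (x * a * y) * v := by rw [← hxy, ← huv]
        _ = (u * x) * a * (y * v) := by simp [mul_assoc]
    obtain ⟨m, hm1, hml⟩ := stab_left key
    obtain ⟨k, hk1, hkr⟩ := stab_right key
    refine ⟨x * a, ?_, ?_⟩
    · ext z
      constructor
      · rintro ⟨w, rfl⟩
        refine ⟨w * (u * x) ^ (m - 1) * u, ?_⟩
        conv_lhs => rw [hml]
        have : (u * x) ^ m = (u * x) ^ (m - 1) * (u * x) := by
          conv_lhs => rw [show m = (m - 1) + 1 by omega]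
          rw [pow_succ]
        rw [this]; simp [mul_assoc]
      · rintro ⟨w, rfl⟩
        exact ⟨w * x, by simp [mul_assoc]⟩
    · ext z
      constructor
      · rintro ⟨w, rfl⟩
        refine ⟨v * (y * v) ^ (k - 1) * w, ?_⟩
        conv_lhs => rw [hkr]
        have : (y * v) ^ k = y * (v * (y * v) ^ (k - 1)) := by
          conv_lhs => rw [show k = 1 + (k - 1) by omega]
          rw [pow_add, pow_one]; simp [mul_assoc]
        rw [this, hxy]; simp [mul_assoc]
      · rintro ⟨w, rfl⟩
        exact ⟨y * w, by rw [hxy]; simp [mul_assoc]⟩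
end
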